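/- (Theorem 2, Q-linear convergence rate) Let ω ∈ (0,2) and θ ≥ 0 be such that δ = 2θ/ω + ((2−ω)/ω)·minᵢ Dᵢᵢ > 0. Let x* be a global minimizer of f, let z be a triangle-proximal point of x, and suppose the error bound ‖x − x*‖ ≤ η·‖x − z‖ holds for some constant η > 0. Then f(z) − f(x*) ≤ (C₁/(1 + C₁))·(f(x) − f(x*)), where C₁ = ((3 + η²)‖C‖ + 2(η² + 1)‖A‖)/δ. In particular, applied along the iterates xᵏ⁺¹ = T(xᵏ), the optimality gap f(xᵏ) − f(x*) decreases Q-linearly with ratio C₁/(1 + C₁) < 1. -/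

import Mathlib

open scoped RealInnerProductSpace
open Matrix Filter

noncomputable section

/-- Euclidean space ℝⁿ. -/
abbrev E (n : ℕ) := EuclideanSpace ℝ (Fin n)

/-- Matrix-vector multiplication, valued in Euclidean space. -/
def mulVecE {n : ℕ} (M : Matrix (Fin n) (Fin n) ℝ) (x : E n) : E n :=
  (WithLp.equiv 2 (Fin n → ℝ)).symm (M.mulVec ((WithLp.equiv 2 (Fin n → ℝ)) x))

/-- Operator (spectral) norm of a matrix. -/
def opNorm {n : ℕ} (M : Matrix (Fin n) (Fin n) ℝ) : ℝ :=
  ‖Matrix.toEuclideanCLM (𝕜 := ℝ) M‖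

/-- The diagonal part `D` of `A`. -/
def Dmat {n : ℕ} (A : Matrix (Fin n) (Fin n) ℝ) : Matrix (Fin n) (Fin n) ℝ :=
  Matrix.diagonal fun i => A i i

/-- The strictly lower triangular part `L` of `A`. -/
def Lmat {n : ℕ} (A : Matrix (Fin n) (Fin n) ℝ) : Matrix (Fin n) (Fin n) ℝ :=
  Matrix.of fun i j => if (j : ℕ) < (i : ℕ) then A i j else 0

/-- `B = L + (1/ω)(D + θI)`. -/
def Bmat {n : ℕ} (ω θ : ℝ) (A : Matrix (Fin n) (Fin n) ℝ) : Matrix (Fin n) (Fin n) ℝ :=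
  Lmat A + ω⁻¹ • (Dmat A + θ • (1 : Matrix (Fin n) (Fin n) ℝ))

/-- `C = Lᵀ + (1/ω)((ω−1)D − θI)`. -/
def Cmat {n : ℕ} (ω θ : ℝ) (A : Matrix (Fin n) (Fin n) ℝ) : Matrix (Fin n) (Fin n) ℝ :=
  (Lmat A)ᵀ + ω⁻¹ • ((ω - 1) • Dmat A - θ • (1 : Matrix (Fin n) (Fin n) ℝ))

/-- `v` is a subgradient of `h` at `z`. -/
def IsSubgradient {n : ℕ} (h : E n → ℝ) (v z : E n) : Prop :=
  ∀ y, h z + ⟪v, y - z⟫ ≤ h y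

/-- The composite objective `f(x) = (1/2)⟨x, Ax⟩ + ⟨b, x⟩ + h(x)`. -/
def fObj {n : ℕ} (A : Matrix (Fin n) (Fin n) ℝ) (b : E n) (h : E n → ℝ) (x : E n) : ℝ :=
  (1/2) * ⟪x, mulVecE A x⟫ + ⟪b, x⟫ + h x

/-- `z` is a triangle-proximal point of `x`: there is a subgradient `v` of `h` at `z`
with `Bz + b + Cx + v = 0`. -/
def IsTriangleProx {n : ℕ} (ω θ : ℝ) (A : Matrix (Fin n) (Fin n) ℝ) (b : E n)
    (h : E n → ℝ) (x z : E n) : Prop :=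
  ∃ v, IsSubgradient h v z ∧
    mulVecE (Bmat ω θ A) z + b + mulVecE (Cmat ω θ A) x + v = 0

/-! The optimality condition of the triangle-proximal step and `A = B + C` give, for every `y`,
the three-point inequality `f z + ½⟪y - z, A (y - z)⟫ ≤ f y + ⟪C (x - z), y - z⟫`.
At `y = x` it is the sufficient decrease `f x - f z ≥ ½⟪x - z, (B - Cᵀ) (x - z)⟫ ≥ (δ/2)‖x - z‖²`,
because `B - Cᵀ = ((2 - ω)/ω) D + (2θ/ω) I` is diagonal. At `y = x*` it bounds the gap
`f z - f x*` by `‖C‖ ‖x - z‖ ‖x* - z‖ + (‖A‖/2) ‖x* - z‖²`, which the error bound turns into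
`C₁ (δ/2) ‖x - z‖² ≤ C₁ (f x - f z)`; then `f z - f x* ≤ C₁ ((f x - f x*) - (f z - f x*))`
rearranges to the rate. -/

section

variable {n : ℕ}

theorem mulVecE_eq_toEuclideanCLM (M : Matrix (Fin n) (Fin n) ℝ) (x : E n) :
    mulVecE M x = Matrix.toEuclideanCLM (𝕜 := ℝ) M x := rfl

theorem mulVecE_sub_left (M N : Matrix (Fin n) (Fin n) ℝ) (x : E n) :
    mulVecE (M - N) x = mulVecE M x - mulVecE N x := by
  simp [mulVecE_eq_toEuclideanCLM]

theorem mulVecE_add_left (M N : Matrix (Fin n) (Fin n) ℝ) (x : E n) :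
    mulVecE (M + N) x = mulVecE M x + mulVecE N x := by
  simp [mulVecE_eq_toEuclideanCLM]

theorem mulVecE_sub_right (M : Matrix (Fin n) (Fin n) ℝ) (x y : E n) :
    mulVecE M (x - y) = mulVecE M x - mulVecE M y := by
  simp [mulVecE_eq_toEuclideanCLM]

theorem norm_mulVecE_le (M : Matrix (Fin n) (Fin n) ℝ) (x : E n) :
    ‖mulVecE M x‖ ≤ opNorm M * ‖x‖ :=
  (Matrix.toEuclideanCLM (𝕜 := ℝ) M).le_opNorm x

theorem opNorm_nonneg (M : Matrix (Fin n) (Fin n) ℝ) : 0 ≤ opNorm M := norm_nonneg _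

theorem inner_mulVecE_transpose (M : Matrix (Fin n) (Fin n) ℝ) (u v : E n) :
    ⟪u, mulVecE Mᵀ v⟫ = ⟪mulVecE M u, v⟫ := by
  rw [mulVecE_eq_toEuclideanCLM, mulVecE_eq_toEuclideanCLM, real_inner_comm v,
    Matrix.inner_toEuclideanCLM, Matrix.inner_toEuclideanCLM, Matrix.dotProduct_mulVec,
    Matrix.vecMul_transpose, dotProduct_comm]

theorem inner_mulVecE_diagonal_ge {d : Fin n → ℝ} {δ : ℝ} (hd : ∀ i, δ ≤ d i) (w : E n) :
    δ * ‖w‖ ^ 2 ≤ ⟪w, mulVecE (diagonal d) w⟫ := by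
  rw [mulVecE_eq_toEuclideanCLM, Matrix.inner_toEuclideanCLM, EuclideanSpace.norm_sq_eq,
    Finset.mul_sum, dotProduct]
  refine Finset.sum_le_sum fun i _ => ?_
  rw [mulVec_diagonal, Real.norm_eq_abs, sq_abs]
  nlinarith [hd i, sq_nonneg (w i)]

theorem Lmat_add_Dmat_add_transpose {A : Matrix (Fin n) (Fin n) ℝ} (hA : A.IsSymm) :
    Lmat A + Dmat A + (Lmat A)ᵀ = A := by
  ext i j
  rcases lt_trichotomy i j with hij | rfl | hij
  · simp [Lmat, Dmat, hij, hij.ne, not_lt.2 hij.le, hA.apply i j]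
  · simp [Lmat, Dmat]
  · simp [Lmat, Dmat, hij, hij.ne', not_lt.2 hij.le]

theorem Bmat_add_Cmat {A : Matrix (Fin n) (Fin n) ℝ} (hA : A.IsSymm) {ω : ℝ} (hω : ω ≠ 0)
    (θ : ℝ) : Bmat ω θ A + Cmat ω θ A = A := by
  have hdiag : ω⁻¹ • (Dmat A + θ • 1) + ω⁻¹ • ((ω - 1) • Dmat A - θ • 1) = Dmat A := by
    match_scalars <;> field_simp <;> ring
  conv_rhs => rw [← Lmat_add_Dmat_add_transpose hA, ← hdiag]
  rw [Bmat, Cmat]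
  abel

theorem Bmat_sub_transpose_Cmat (A : Matrix (Fin n) (Fin n) ℝ) (ω θ : ℝ) :
    Bmat ω θ A - (Cmat ω θ A)ᵀ = diagonal fun i => (2 - ω) / ω * A i i + 2 * θ / ω := by
  ext i j
  by_cases hij : i = j
  · subst hij; simp [Bmat, Cmat, Dmat]; ring
  · simp [Bmat, Cmat, Dmat, hij]

theorem inner_mulVecE_comm {A : Matrix (Fin n) (Fin n) ℝ} (hA : A.IsSymm) (u v : E n) :
    ⟪u, mulVecE A v⟫ = ⟪mulVecE A u, v⟫ := by
  conv_lhs => rw [← hA.eq]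
  exact inner_mulVecE_transpose A u v

theorem IsTriangleProx.fObj_add_le {A : Matrix (Fin n) (Fin n) ℝ} (hA : A.IsSymm) {ω : ℝ}
    (hω : ω ≠ 0) {θ : ℝ} {b : E n} {h : E n → ℝ} {x z : E n}
    (hz : IsTriangleProx ω θ A b h x z) (y : E n) :
    fObj A b h z + 1 / 2 * ⟪y - z, mulVecE A (y - z)⟫
      ≤ fObj A b h y + ⟪mulVecE (Cmat ω θ A) (x - z), y - z⟫ := by
  obtain ⟨v, hv, heq⟩ := hz
  have hB : Bmat ω θ A = A - Cmat ω θ A := eq_sub_of_add_eq (Bmat_add_Cmat hA hω θ)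
  have hv_eq : v = -(mulVecE A z + b) - mulVecE (Cmat ω θ A) (x - z) := by
    rw [hB, mulVecE_sub_left] at heq
    rw [mulVecE_sub_right]
    linear_combination (norm := module) heq
  have hsub := hv y
  rw [hv_eq] at hsub
  simp only [fObj, inner_sub_left, inner_sub_right, inner_neg_left, inner_add_left,
    mulVecE_sub_right] at hsub ⊢
  linarith [inner_mulVecE_comm hA z y, real_inner_comm (mulVecE A z) z,
    real_inner_comm (mulVecE A z) y]

theorem abs_inner_mulVecE_le (M : Matrix (Fin n) (Fin n) ℝ) (u v : E n) :
    |⟪u, mulVecE M v⟫| ≤ opNorm M * ‖u‖ * ‖v‖ :=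
  calc |⟪u, mulVecE M v⟫| ≤ ‖u‖ * ‖mulVecE M v‖ := abs_real_inner_le_norm _ _
    _ ≤ ‖u‖ * (opNorm M * ‖v‖) := by gcongr; exact norm_mulVecE_le M v
    _ = opNorm M * ‖u‖ * ‖v‖ := by ring

theorem IsTriangleProx.sufficient_decrease {A : Matrix (Fin n) (Fin n) ℝ} (hA : A.IsSymm)
    {ω : ℝ} (hω : ω ≠ 0) {θ : ℝ} {b : E n} {h : E n → ℝ} {x z : E n}
    (hz : IsTriangleProx ω θ A b h x z) {δ : ℝ}
    (hδ : ∀ i, δ ≤ (2 - ω) / ω * A i i + 2 * θ / ω) :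
    δ / 2 * ‖x - z‖ ^ 2 ≤ fObj A b h x - fObj A b h z := by
  set C := Cmat ω θ A
  have hprox := hz.fObj_add_le hA hω x
  have hsplit : ⟪x - z, mulVecE A (x - z)⟫
      = ⟪x - z, mulVecE (Bmat ω θ A) (x - z)⟫ + ⟪x - z, mulVecE C (x - z)⟫ := by
    rw [← inner_add_right, ← mulVecE_add_left, Bmat_add_Cmat hA hω]
  have hdiag := inner_mulVecE_diagonal_ge hδ (x - z)
  rw [← Bmat_sub_transpose_Cmat, mulVecE_sub_left, inner_sub_right,
    inner_mulVecE_transpose] at hdiag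
  linarith [real_inner_comm (mulVecE C (x - z)) (x - z)]

theorem IsTriangleProx.fObj_sub_le {A : Matrix (Fin n) (Fin n) ℝ} (hA : A.IsSymm) {ω : ℝ}
    (hω : ω ≠ 0) {θ : ℝ} {b : E n} {h : E n → ℝ} {x z : E n}
    (hz : IsTriangleProx ω θ A b h x z) (y : E n) :
    fObj A b h z - fObj A b h y
      ≤ opNorm (Cmat ω θ A) * ‖x - z‖ * ‖y - z‖ + opNorm A / 2 * ‖y - z‖ ^ 2 := by
  have hprox := hz.fObj_add_le hA hω y
  have hA_bound := abs_le.1 (abs_inner_mulVecE_le A (y - z) (y - z))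
  have hC_bound := (abs_le.1 (abs_inner_mulVecE_le (Cmat ω θ A) (y - z) (x - z))).2
  rw [real_inner_comm] at hC_bound
  linarith

end

theorem le_div_one_add_mul_of_le_mul_sub {a b c : ℝ} (hc : 0 ≤ c) (h : a ≤ c * (b - a)) :
    a ≤ c / (1 + c) * b := by
  rw [div_mul_eq_mul_div, le_div_iff₀ (by linarith)]
  linarith

/-- The origin of the constant `C₁`: `2 (1 + η) ≤ 3 + η²` and `(1 + η)² ≤ 2 (1 + η²)`. -/
theorem add_mul_one_add_sq_le {c a η : ℝ} (hc : 0 ≤ c) (ha : 0 ≤ a) :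
    c * (1 + η) + a / 2 * (1 + η) ^ 2 ≤ ((3 + η ^ 2) * c + 2 * (η ^ 2 + 1) * a) / 2 := by
  nlinarith [mul_nonneg hc (sq_nonneg (η - 1)), mul_nonneg ha (sq_nonneg (η - 1))]

theorem msm_q_linear_rate_general {n : ℕ}
    (A : Matrix (Fin n) (Fin n) ℝ) (hA : A.IsSymm) (b : E n) (h : E n → ℝ)
    (ω θ : ℝ) (hω : ω ∈ Set.Ioo (0 : ℝ) 2)
    (δ : ℝ) (hδ : δ = 2 * θ / ω + (2 - ω) / ω * ⨅ i, A i i) (hδpos : 0 < δ)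
    (xstar : E n)
    (x z : E n) (hz : IsTriangleProx ω θ A b h x z)
    (η : ℝ) (herr : ‖x - xstar‖ ≤ η * ‖x - z‖)
    (C₁ : ℝ)
    (hC₁ : C₁ = ((3 + η ^ 2) * opNorm (Cmat ω θ A)
        + 2 * (η ^ 2 + 1) * opNorm A) / δ) :
    fObj A b h z - fObj A b h xstar
      ≤ (C₁ / (1 + C₁)) * (fObj A b h x - fObj A b h xstar) := by
  obtain ⟨hω₀, hω₂⟩ := hω
  have hdiag (i : Fin n) : δ ≤ (2 - ω) / ω * A i i + 2 * θ / ω := by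
    have hcoef : 0 ≤ (2 - ω) / ω := div_nonneg (by linarith) hω₀.le
    rw [hδ, add_comm]
    gcongr
    exact ciInf_le (Finite.bddBelow_range _) i
  have hdist : ‖xstar - z‖ ≤ (1 + η) * ‖x - z‖ := by
    linarith [norm_sub_le_norm_sub_add_norm_sub xstar x z, norm_sub_rev xstar x]
  have hCnorm := opNorm_nonneg (Cmat ω θ A)
  have hAnorm := opNorm_nonneg A
  have hC₁_nonneg : 0 ≤ C₁ := by rw [hC₁]; positivity
  refine le_div_one_add_mul_of_le_mul_sub hC₁_nonneg ?_
  calc fObj A b h z - fObj A b h xstar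
      ≤ opNorm (Cmat ω θ A) * ‖x - z‖ * ‖xstar - z‖ + opNorm A / 2 * ‖xstar - z‖ ^ 2 :=
        hz.fObj_sub_le hA hω₀.ne' xstar
    _ ≤ opNorm (Cmat ω θ A) * ‖x - z‖ * ((1 + η) * ‖x - z‖)
          + opNorm A / 2 * ((1 + η) * ‖x - z‖) ^ 2 := by gcongr
    _ = (opNorm (Cmat ω θ A) * (1 + η) + opNorm A / 2 * (1 + η) ^ 2) * ‖x - z‖ ^ 2 := by ring
    _ ≤ ((3 + η ^ 2) * opNorm (Cmat ω θ A) + 2 * (η ^ 2 + 1) * opNorm A) / 2 * ‖x - z‖ ^ 2 := by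
        gcongr; exact add_mul_one_add_sq_le hCnorm hAnorm
    _ = C₁ * (δ / 2 * ‖x - z‖ ^ 2) := by rw [hC₁]; field_simp
    _ ≤ C₁ * (fObj A b h x - fObj A b h xstar - (fObj A b h z - fObj A b h xstar)) := by
        rw [sub_sub_sub_cancel_right]
        gcongr
        exact hz.sufficient_decrease hA hω₀.ne' hdiag

/-- Theorem 2, Q-linear convergence rate. -/
theorem msm_q_linear_rate {n : ℕ} (hn : 0 < n)
    (A : Matrix (Fin n) (Fin n) ℝ) (hA : A.IsSymm) (b : E n) (h : E n → ℝ)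
    (ω θ : ℝ) (hω : ω ∈ Set.Ioo (0 : ℝ) 2) (hθ : 0 ≤ θ)
    (δ : ℝ) (hδ : δ = 2 * θ / ω + (2 - ω) / ω * ⨅ i, A i i) (hδpos : 0 < δ)
    (xstar : E n) (hxstar : ∀ y : E n, fObj A b h xstar ≤ fObj A b h y)
    (x z : E n) (hz : IsTriangleProx ω θ A b h x z)
    (η : ℝ) (hη : 0 < η) (herr : ‖x - xstar‖ ≤ η * ‖x - z‖)
    (C₁ : ℝ)
    (hC₁ : C₁ = ((3 + η ^ 2) * opNorm (Cmat ω θ A)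
        + 2 * (η ^ 2 + 1) * opNorm A) / δ) :
    fObj A b h z - fObj A b h xstar
      ≤ (C₁ / (1 + C₁)) * (fObj A b h x - fObj A b h xstar) :=
  msm_q_linear_rate_general A hA b h ω θ hω δ hδ hδpos xstar x z hz η herr C₁ hC₁
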